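/- arXiv:1102.5059 — 4 statements merged into one kernel-verified Lean document; each statement's English description precedes it below -/
import Mathlib

section
/- Let B ⊂ Z^d be a finite connected subgraph, and let B_{r'}(u'), B_{r''}(u'') ⊆ B be two balls with ‖u'−u''‖ ≥ r' + r'' + 2. Let f : B × B → ℝ≥0 be separately (ℓ,q)-subharmonic in the first variable on B_{r'}(u') and in the second variable on B_{r''}(u''), with 0 < q < 1. Then f(u',u'') ≤ q^{⌊(r'+1)/(ℓ+1)⌋ + ⌊(r''+1)/(ℓ+1)⌋} · M, where M = max_{(x,y)∈B×B} f(x,y). In particular f(u',u'') ≤ q^{(r'+r''−2ℓ)/(ℓ+1)} · M. -/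
/-!
Starting at `u`, subharmonicity lets one step to a point `z` with `‖z - v‖ ≤ ℓ + 1` and
`g v ≤ q g z`, as long as the `ℓ`-ball around the current point `v` lies in `B_r(u)`. This can be
done `n = ⌊(r+1)/(ℓ+1)⌋` times, so `g(u) ≤ q^n M`. Descending first in the first variable
(uniformly in the second), then in the second variable with `q^{n'} M` in place of `M`,
multiplies the two gains.
-/

section Descent

variable {E : Type*} [SeminormedAddCommGroup E]

/-- The paper's `g(v) ≤ q · max {g(y) : ‖y - v‖ ≤ ℓ + 1}`, encoded by a witness `z ∈ B`. -/
def IsSubharmonicIn (ℓ q : ℝ) (B : Set E) (u : E) (r : ℝ) (g : E → ℝ) : Prop :=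
  ∀ v, (∀ z, ‖z - v‖ ≤ ℓ → ‖z - u‖ ≤ r) → ∃ z ∈ B, ‖z - v‖ ≤ ℓ + 1 ∧ g v ≤ q * g z

namespace IsSubharmonicIn

variable {ℓ q r M : ℝ} {B : Set E} {u : E} {g : E → ℝ}

theorem le_pow_mul (hg : IsSubharmonicIn ℓ q B u r g) (hℓ : 0 ≤ ℓ) (hq : 0 ≤ q)
    (hM : ∀ x ∈ B, g x ≤ M) (n : ℕ) :
    ∀ v ∈ B, ‖v - u‖ + n * (ℓ + 1) ≤ r + 1 → g v ≤ q ^ n * M := by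
  induction n with
  | zero => intro v hv _; simpa using hM v hv
  | succ n ih =>
    intro v _ hv
    push_cast at hv
    have hn : (0 : ℝ) ≤ n * (ℓ + 1) := by positivity
    have hball : ∀ z, ‖z - v‖ ≤ ℓ → ‖z - u‖ ≤ r := fun z hz => by
      linarith [norm_sub_le_norm_sub_add_norm_sub z v u]
    obtain ⟨z, hzB, hzv, hgz⟩ := hg v hball
    have hz : g z ≤ q ^ n * M :=
      ih z hzB (by linarith [norm_sub_le_norm_sub_add_norm_sub z v u])
    calc g v ≤ q * g z := hgz
      _ ≤ q * (q ^ n * M) := mul_le_mul_of_nonneg_left hz hq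
      _ = q ^ (n + 1) * M := by ring

theorem apply_center_le (hg : IsSubharmonicIn ℓ q B u r g) (hℓ : 0 ≤ ℓ) (hq : 0 ≤ q)
    (hM : ∀ x ∈ B, g x ≤ M) (hu : u ∈ B) {n : ℕ} (hn : n * (ℓ + 1) ≤ r + 1) :
    g u ≤ q ^ n * M :=
  hg.le_pow_mul hℓ hq hM n u hu (by simpa using hn)

end IsSubharmonicIn

theorem apply_le_pow_add_mul_of_isSubharmonicIn {ℓ q r' r'' M : ℝ} {B : Set E} {u' u'' : E}
    {f : E → E → ℝ} (hℓ : 0 ≤ ℓ) (hq : 0 ≤ q)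
    (h₁ : ∀ y ∈ B, IsSubharmonicIn ℓ q B u' r' (f · y))
    (h₂ : ∀ x ∈ B, IsSubharmonicIn ℓ q B u'' r'' (f x))
    (hM : ∀ x ∈ B, ∀ y ∈ B, f x y ≤ M) (hu' : u' ∈ B) (hu'' : u'' ∈ B)
    {n' n'' : ℕ} (hn' : n' * (ℓ + 1) ≤ r' + 1) (hn'' : n'' * (ℓ + 1) ≤ r'' + 1) :
    f u' u'' ≤ q ^ (n' + n'') * M := by
  have hfirst : ∀ y ∈ B, f u' y ≤ q ^ n' * M := fun y hy =>
    (h₁ y hy).apply_center_le hℓ hq (fun x hx => hM x hx y hy) hu' hn'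
  calc f u' u'' ≤ q ^ n'' * (q ^ n' * M) :=
        (h₂ u' hu').apply_center_le hℓ hq hfirst hu'' hn''
    _ = q ^ (n' + n'') * M := by ring

end Descent

theorem cast_succ_div_succ_mul_le (r ℓ : ℕ) :
    (((r + 1) / (ℓ + 1) : ℕ) : ℝ) * (ℓ + 1) ≤ r + 1 := by
  have hℓ : (0 : ℝ) < ℓ + 1 := by positivity
  have := Nat.cast_div_le (α := ℝ) (m := r + 1) (n := ℓ + 1)
  push_cast at this
  rwa [le_div_iff₀ hℓ] at this

theorem sub_div_succ_lt_cast_succ_div_succ (r ℓ : ℕ) :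
    ((r : ℝ) - ℓ) / (ℓ + 1) < (((r + 1) / (ℓ + 1) : ℕ) : ℝ) := by
  have hℓ : (0 : ℝ) < ℓ + 1 := by positivity
  have h := Nat.sub_one_lt_floor (((r + 1 : ℕ) : ℝ) / ((ℓ + 1 : ℕ) : ℝ))
  rw [Nat.floor_div_eq_div] at h
  calc ((r : ℝ) - ℓ) / (ℓ + 1) = ((r + 1 : ℕ) : ℝ) / ((ℓ + 1 : ℕ) : ℝ) - 1 := by
        push_cast; field_simp; ring
    _ < _ := h

theorem stmt_1_general (d : ℕ) (B : Finset (Fin d → ℤ))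
    (r' r'' ℓ : ℕ) (q : ℝ) (hq0 : 0 < q) (hq1 : q < 1)
    (u' u'' : Fin d → ℤ)
    (hB' : ∀ x : Fin d → ℤ, ‖x - u'‖ ≤ (r' : ℝ) → x ∈ B)
    (hB'' : ∀ x : Fin d → ℤ, ‖x - u''‖ ≤ (r'' : ℝ) → x ∈ B)
    (f : (Fin d → ℤ) → (Fin d → ℤ) → ℝ) (hf0 : ∀ x y, 0 ≤ f x y)
    (hsub1 : ∀ y'' ∈ B, ∀ v : Fin d → ℤ,
      (∀ z : Fin d → ℤ, ‖z - v‖ ≤ (ℓ : ℝ) → ‖z - u'‖ ≤ (r' : ℝ)) →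
      ∃ z ∈ B, ‖z - v‖ ≤ (ℓ : ℝ) + 1 ∧ f v y'' ≤ q * f z y'')
    (hsub2 : ∀ x' ∈ B, ∀ v : Fin d → ℤ,
      (∀ z : Fin d → ℤ, ‖z - v‖ ≤ (ℓ : ℝ) → ‖z - u''‖ ≤ (r'' : ℝ)) →
      ∃ z ∈ B, ‖z - v‖ ≤ (ℓ : ℝ) + 1 ∧ f x' v ≤ q * f x' z)
    (M : ℝ) (hM : ∀ x ∈ B, ∀ y ∈ B, f x y ≤ M) :
    f u' u'' ≤ q ^ ((r' + 1) / (ℓ + 1) + (r'' + 1) / (ℓ + 1)) * M ∧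
    f u' u'' ≤ q ^ (((r' : ℝ) + (r'' : ℝ) - 2 * (ℓ : ℝ)) / ((ℓ : ℝ) + 1)) * M := by
  have hu' : u' ∈ B := hB' u' (by simp)
  have hu'' : u'' ∈ B := hB'' u'' (by simp)
  have hfloor : f u' u'' ≤ q ^ ((r' + 1) / (ℓ + 1) + (r'' + 1) / (ℓ + 1)) * M :=
    apply_le_pow_add_mul_of_isSubharmonicIn (B := (B : Set (Fin d → ℤ))) (Nat.cast_nonneg ℓ)
      hq0.le hsub1 hsub2 hM hu' hu'' (cast_succ_div_succ_mul_le r' ℓ)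
      (cast_succ_div_succ_mul_le r'' ℓ)
  have hexp : ((r' : ℝ) + r'' - 2 * ℓ) / (ℓ + 1) ≤
      (((r' + 1) / (ℓ + 1) + (r'' + 1) / (ℓ + 1) : ℕ) : ℝ) := by
    have h' := sub_div_succ_lt_cast_succ_div_succ r' ℓ
    have h'' := sub_div_succ_lt_cast_succ_div_succ r'' ℓ
    push_cast
    calc ((r' : ℝ) + r'' - 2 * ℓ) / (ℓ + 1) = (r' - ℓ) / (ℓ + 1) + (r'' - ℓ) / (ℓ + 1) := by ring
      _ ≤ _ := by linarith
  have hM0 : 0 ≤ M := (hf0 u' u'').trans (hM u' hu' u'' hu'')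
  refine ⟨hfloor, hfloor.trans (mul_le_mul_of_nonneg_right ?_ hM0)⟩
  rw [← Real.rpow_natCast]
  exact Real.rpow_le_rpow_of_exponent_ge hq0 hq1.le hexp

/-- **Two-variable radial descent** (Lemma 3.6). If `f : B × B → ℝ≥0` is separately
`(ℓ,q)`-subharmonic in the first variable on `B_{r'}(u')` and in the second variable on
`B_{r''}(u'')`, with `‖u'-u''‖ ≥ r'+r''+2`, then
`f(u',u'') ≤ q^(⌊(r'+1)/(ℓ+1)⌋+⌊(r''+1)/(ℓ+1)⌋) · M ≤ q^((r'+r''-2ℓ)/(ℓ+1)) · M`. -/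
theorem stmt_1 (d : ℕ) (B : Finset (Fin d → ℤ)) (hB : B.Nonempty)
    (r' r'' ℓ : ℕ) (q : ℝ) (hq0 : 0 < q) (hq1 : q < 1)
    (u' u'' : Fin d → ℤ)
    (hB' : ∀ x : Fin d → ℤ, ‖x - u'‖ ≤ (r' : ℝ) → x ∈ B)
    (hB'' : ∀ x : Fin d → ℤ, ‖x - u''‖ ≤ (r'' : ℝ) → x ∈ B)
    (hdist : (r' : ℝ) + (r'' : ℝ) + 2 ≤ ‖u' - u''‖)
    (f : (Fin d → ℤ) → (Fin d → ℤ) → ℝ) (hf0 : ∀ x y, 0 ≤ f x y)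
    (hsub1 : ∀ y'' ∈ B, ∀ v : Fin d → ℤ,
      (∀ z : Fin d → ℤ, ‖z - v‖ ≤ (ℓ : ℝ) → ‖z - u'‖ ≤ (r' : ℝ)) →
      ∃ z ∈ B, ‖z - v‖ ≤ (ℓ : ℝ) + 1 ∧ f v y'' ≤ q * f z y'')
    (hsub2 : ∀ x' ∈ B, ∀ v : Fin d → ℤ,
      (∀ z : Fin d → ℤ, ‖z - v‖ ≤ (ℓ : ℝ) → ‖z - u''‖ ≤ (r'' : ℝ)) →
      ∃ z ∈ B, ‖z - v‖ ≤ (ℓ : ℝ) + 1 ∧ f x' v ≤ q * f x' z)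
    (M : ℝ) (hM : ∀ x ∈ B, ∀ y ∈ B, f x y ≤ M) :
    f u' u'' ≤ q ^ ((r' + 1) / (ℓ + 1) + (r'' + 1) / (ℓ + 1)) * M ∧
    f u' u'' ≤ q ^ (((r' : ℝ) + (r'' : ℝ) - 2 * (ℓ : ℝ)) / ((ℓ : ℝ) + 1)) * M :=
  stmt_1_general d B r' r'' ℓ q hq0 hq1 u' u'' hB' hB'' f hf0 hsub1 hsub2 M hM
end

section
/- Let H be a self-adjoint operator on the finite-dimensional Hilbert space ℓ²(B_L(u)) with orthonormal eigenbasis {ψ_j} and eigenvalues {E_j}. Suppose (i) dist(E, spec(H)) ≥ e^{−L^β} for some E ∈ ℝ and 0 < β < 1, (ii) ln((2L+1)^d) ≤ L^β, and (iii) for every j and every x, y ∈ B_L(u) with ‖x−y‖ ≥ L^{7/8}, |ψ_j(x)|·|ψ_j(y)| ≤ e^{−γ‖x−y‖} where γ > 0. Then for every such pair x, y, the Green function G(x,y;E) = Σ_j ψ_j(x)·conj(ψ_j(y))/(E−E_j) satisfies |G(x,y;E)| ≤ e^{−γ‖x−y‖ + 2L^β}. -/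
/-! Each of the at most `(2L+1)^d ≤ e^{L^β}` terms of the spectral sum is bounded by
`|ψ_j(x)||ψ_j(y)| / |E - E_j| ≤ e^{-γ‖x-y‖} e^{L^β}`, by localization and non-resonance. -/

open Finset

lemma norm_spectral_sum_le {ι : Type*} [Fintype ι] (a b : ι → ℂ) (ev : ι → ℝ)
    {E δ M : ℝ} (hδ : 0 < δ) (hres : ∀ j, δ ≤ |E - ev j|) (hab : ∀ j, ‖a j‖ * ‖b j‖ ≤ M) :
    ‖∑ j, a j * starRingEnd ℂ (b j) / ((E : ℂ) - ev j)‖ ≤ Fintype.card ι * (M / δ) := by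
  have hterm : ∀ j, ‖a j * starRingEnd ℂ (b j) / ((E : ℂ) - ev j)‖ ≤ M / δ := fun j => by
    rw [norm_div, norm_mul, Complex.norm_conj, ← Complex.ofReal_sub, Complex.norm_real,
      Real.norm_eq_abs]
    exact div_le_div₀ ((by positivity : (0 : ℝ) ≤ ‖a j‖ * ‖b j‖).trans (hab j)) (hab j) hδ
      (hres j)
  calc _ ≤ ∑ j, ‖a j * starRingEnd ℂ (b j) / ((E : ℂ) - ev j)‖ := norm_sum_le _ _
    _ ≤ ∑ _j : ι, M / δ := sum_le_sum fun j _ => hterm j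
    _ = Fintype.card ι * (M / δ) := by rw [sum_const, card_univ, nsmul_eq_mul]

theorem stmt_2_general (d L : ℕ) (u : Fin d → ℤ) (β γ E : ℝ)
    (n : ℕ) (hn : (n : ℝ) ≤ (2 * (L : ℝ) + 1) ^ d)
    (ψ : Fin n → (Fin d → ℤ) → ℂ) (Ev : Fin n → ℝ)
    (hres : ∀ j, Real.exp (-(L : ℝ) ^ β) ≤ |E - Ev j|)
    (hlog : Real.log ((2 * (L : ℝ) + 1) ^ d) ≤ (L : ℝ) ^ β)
    (hloc : ∀ j, ∀ x y : Fin d → ℤ, ‖x - u‖ ≤ (L : ℝ) → ‖y - u‖ ≤ (L : ℝ) →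
      (L : ℝ) ^ ((7 : ℝ) / 8) ≤ ‖x - y‖ →
      ‖ψ j x‖ * ‖ψ j y‖ ≤ Real.exp (-γ * ‖x - y‖)) :
    ∀ x y : Fin d → ℤ, ‖x - u‖ ≤ (L : ℝ) → ‖y - u‖ ≤ (L : ℝ) →
      (L : ℝ) ^ ((7 : ℝ) / 8) ≤ ‖x - y‖ →
      ‖∑ j, ψ j x * (starRingEnd ℂ) (ψ j y) / ((E : ℂ) - (Ev j : ℂ))‖ ≤
        Real.exp (-γ * ‖x - y‖ + 2 * (L : ℝ) ^ β) := by
  intro x y hx hy hxy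
  have hcard : (n : ℝ) ≤ Real.exp ((L : ℝ) ^ β) :=
    hn.trans ((Real.log_le_iff_le_exp (by positivity)).mp hlog)
  calc _ ≤ n * (Real.exp (-γ * ‖x - y‖) / Real.exp (-(L : ℝ) ^ β)) := by
        simpa using norm_spectral_sum_le (ψ · x) (ψ · y) Ev (Real.exp_pos _) hres
          fun j => hloc j x y hx hy hxy
    _ ≤ Real.exp ((L : ℝ) ^ β) * (Real.exp (-γ * ‖x - y‖) / Real.exp (-(L : ℝ) ^ β)) := by
        gcongr
    _ = Real.exp (-γ * ‖x - y‖ + 2 * (L : ℝ) ^ β) := by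
        rw [← Real.exp_sub, ← Real.exp_add]
        ring_nf

/-- Lemma 3.8 / Lemma in §4: an `m`-localized, `E`-non-resonant ball is `(E,m)`-non-singular.
If all eigenvalues `E_j` are at distance `≥ e^{-L^β}` from `E`, the number of eigenvalues is
at most `(2L+1)^d` with `ln (2L+1)^d ≤ L^β`, and every normalized eigenfunction satisfies
`|ψ_j(x)||ψ_j(y)| ≤ e^{-γ‖x-y‖}` for `‖x-y‖ ≥ L^{7/8}` in the ball, then the Green function
`G(x,y;E) = Σ_j ψ_j(x) conj(ψ_j(y))/(E-E_j)` satisfies `|G(x,y;E)| ≤ e^{-γ‖x-y‖+2L^β}`. -/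
theorem stmt_2 (d L : ℕ) (hL : 1 ≤ L) (u : Fin d → ℤ) (β γ E : ℝ)
    (hβ0 : 0 < β) (hβ1 : β < 1) (hγ : 0 < γ)
    (n : ℕ) (hn : (n : ℝ) ≤ (2 * (L : ℝ) + 1) ^ d)
    (ψ : Fin n → (Fin d → ℤ) → ℂ) (Ev : Fin n → ℝ)
    (hres : ∀ j, Real.exp (-(L : ℝ) ^ β) ≤ |E - Ev j|)
    (hlog : Real.log ((2 * (L : ℝ) + 1) ^ d) ≤ (L : ℝ) ^ β)
    (hloc : ∀ j, ∀ x y : Fin d → ℤ, ‖x - u‖ ≤ (L : ℝ) → ‖y - u‖ ≤ (L : ℝ) →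
      (L : ℝ) ^ ((7 : ℝ) / 8) ≤ ‖x - y‖ →
      ‖ψ j x‖ * ‖ψ j y‖ ≤ Real.exp (-γ * ‖x - y‖)) :
    ∀ x y : Fin d → ℤ, ‖x - u‖ ≤ (L : ℝ) → ‖y - u‖ ≤ (L : ℝ) →
      (L : ℝ) ^ ((7 : ℝ) / 8) ≤ ‖x - y‖ →
      ‖∑ j, ψ j x * (starRingEnd ℂ) (ψ j y) / ((E : ℂ) - (Ev j : ℂ))‖ ≤
        Real.exp (-γ * ‖x - y‖ + 2 * (L : ℝ) ^ β) :=
  stmt_2_general d L u β γ E n hn ψ Ev hres hlog hloc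
end

section
/- Let Λ be a finite set, H a self-adjoint operator on ℓ²(Λ) with orthonormal eigenbasis {ψ_i} and eigenvalues {λ_i}, and I ⊂ ℝ an interval. Fix x, y ∈ Λ. Suppose there is a finite set S of points of Λ, and for each i with λ_i ∈ I there exists z_i ∈ {x,y} such that |ψ_i(z_i)| ≤ e^{−mL} · Σ_{u∈S} |ψ_i(u)| for some m > 0 and L ≥ 1. Then for every Borel function φ with sup|φ| ≤ 1 and supp φ ⊆ I, the eigenfunction correlator satisfies |⟨δ_x, φ(H) δ_y⟩| ≤ 2|S| · e^{−mL}. -/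
/-!
Expand `⟨δ_x, φ(H) δ_y⟩` in the eigenbasis and bound it term by term. For an eigenvalue in `I`,
one of `|ψ_i(x)|`, `|ψ_i(y)|` is at most `e^{-mL} Σ_{u∈S} |ψ_i(u)|`, and `ab ≤ (a² + b²)/2`
turns the product `|ψ_i(x)| |ψ_i(y)|` into `e^{-mL}/2` times a sum over `S` of squares of
eigenfunction values. Summed over `i`, each square sum is at most `1` by Bessel's inequality
for `δ_u`, `δ_x`, `δ_y`, which gives `(3/2) |S| e^{-mL}`.
-/

open Finset

theorem orthonormal_toLp_of_sum_mul_conj {ι Λ : Type*} [Fintype Λ] [DecidableEq ι]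
    (ψ : ι → Λ → ℂ)
    (horth : ∀ i j, ∑ v, ψ i v * (starRingEnd ℂ) (ψ j v) = if i = j then 1 else 0) :
    Orthonormal ℂ (fun i ↦ (WithLp.toLp 2 (ψ i) : EuclideanSpace ℂ Λ)) := by
  rw [orthonormal_iff_ite]
  intro i j
  simp only [PiLp.inner_apply, RCLike.inner_apply, ← horth j i, eq_comm (a := i)]

theorem Orthonormal.sum_norm_sq_apply_le_one {𝕜 ι Λ : Type*} [RCLike 𝕜] [Fintype ι]
    [Fintype Λ] {v : ι → EuclideanSpace 𝕜 Λ} (hv : Orthonormal 𝕜 v) (u : Λ) :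
    ∑ i, ‖v i u‖ ^ 2 ≤ 1 := by
  classical
  simpa [EuclideanSpace.inner_single_right] using
    hv.sum_inner_products_le (EuclideanSpace.single u (1 : 𝕜)) (s := univ)

theorem mul_le_half_mul_sum_sq_add_sq {Λ : Type*} {S : Finset Λ} {s : Λ → ℝ} {a b c : ℝ}
    (hb : 0 ≤ b) (hc : 0 ≤ c) (ha : a ≤ c * ∑ u ∈ S, s u) :
    a * b ≤ c / 2 * ∑ u ∈ S, (s u ^ 2 + b ^ 2) := by
  calc a * b ≤ (c * ∑ u ∈ S, s u) * b := mul_le_mul_of_nonneg_right ha hb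
    _ = c * ∑ u ∈ S, s u * b := by rw [mul_assoc, sum_mul]
    _ ≤ c * ∑ u ∈ S, (s u ^ 2 + b ^ 2) / 2 := by
        gcongr with u
        nlinarith [sq_nonneg (s u - b)]
    _ = c / 2 * ∑ u ∈ S, (s u ^ 2 + b ^ 2) := by rw [← sum_div]; ring

theorem norm_mul_norm_le_of_exists_norm_le {Λ E : Type*} [SeminormedAddCommGroup E]
    {f : Λ → E} {S : Finset Λ} {c : ℝ} (hc : 0 ≤ c) {x y : Λ}
    (hz : ∃ z ∈ ({x, y} : Set Λ), ‖f z‖ ≤ c * ∑ u ∈ S, ‖f u‖) :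
    ‖f x‖ * ‖f y‖ ≤ c / 2 * ∑ u ∈ S, (‖f u‖ ^ 2 + ‖f x‖ ^ 2 + ‖f y‖ ^ 2) := by
  obtain ⟨z, rfl | rfl, hz⟩ := hz
  · refine (mul_le_half_mul_sum_sq_add_sq (norm_nonneg _) hc hz).trans ?_
    gcongr c / 2 * ∑ u ∈ S, ?_
    linarith [sq_nonneg ‖f z‖]
  · rw [mul_comm]
    refine (mul_le_half_mul_sum_sq_add_sq (norm_nonneg _) hc hz).trans ?_
    gcongr c / 2 * ∑ u ∈ S, ?_
    linarith [sq_nonneg ‖f z‖]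

theorem stmt_3_general {Λ : Type*} [Fintype Λ] (n : ℕ)
    (ψ : Fin n → Λ → ℂ) (lam : Fin n → ℝ)
    (horth : ∀ i j, ∑ v, ψ i v * (starRingEnd ℂ) (ψ j v) = if i = j then 1 else 0)
    (I : Set ℝ) (x y : Λ) (S : Finset Λ) (m L : ℝ)
    (hz : ∀ i, lam i ∈ I → ∃ z ∈ ({x, y} : Set Λ),
      ‖ψ i z‖ ≤ Real.exp (-m * L) * ∑ u ∈ S, ‖ψ i u‖)
    (φ : ℝ → ℂ) (hφ1 : ∀ t, ‖φ t‖ ≤ 1) (hφ2 : ∀ t, t ∉ I → φ t = 0) :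
    ‖∑ i, φ (lam i) * ψ i x * (starRingEnd ℂ) (ψ i y)‖ ≤
      2 * (S.card : ℝ) * Real.exp (-m * L) := by
  set c := Real.exp (-m * L)
  have hc : 0 ≤ c := (Real.exp_pos _).le
  let Q : Fin n → Λ → ℝ := fun i u ↦ ‖ψ i u‖ ^ 2 + ‖ψ i x‖ ^ 2 + ‖ψ i y‖ ^ 2
  have hterm : ∀ i, ‖φ (lam i) * ψ i x * (starRingEnd ℂ) (ψ i y)‖ ≤ c / 2 * ∑ u ∈ S, Q i u := by
    intro i
    rw [norm_mul, norm_mul, Complex.norm_conj, mul_assoc]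
    by_cases hI : lam i ∈ I
    · exact (mul_le_of_le_one_left (by positivity) (hφ1 _)).trans
        (norm_mul_norm_le_of_exists_norm_le hc (hz i hI))
    · rw [hφ2 _ hI, norm_zero, zero_mul]
      positivity
  have hbessel := (orthonormal_toLp_of_sum_mul_conj ψ horth).sum_norm_sq_apply_le_one
  have hQ : ∀ u, ∑ i, Q i u ≤ 3 := fun u ↦ by
    simp only [Q, sum_add_distrib]
    linarith [hbessel u, hbessel x, hbessel y]
  calc ‖∑ i, φ (lam i) * ψ i x * (starRingEnd ℂ) (ψ i y)‖
      ≤ ∑ i, c / 2 * ∑ u ∈ S, Q i u := (norm_sum_le _ _).trans (sum_le_sum fun i _ ↦ hterm i)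
    _ = c / 2 * ∑ u ∈ S, ∑ i, Q i u := by rw [← mul_sum, sum_comm]
    _ ≤ c / 2 * ∑ _u ∈ S, (3 : ℝ) := by gcongr with u; exact hQ u
    _ ≤ 2 * (S.card : ℝ) * c := by
        rw [sum_const, nsmul_eq_mul]; nlinarith [(S.card.cast_nonneg : (0 : ℝ) ≤ S.card)]

/-- Core deterministic estimate of Theorem 4.6 (finite-volume dynamical localization).
For a self-adjoint operator on `ℓ²(Λ)` with orthonormal eigenbasis `{ψ_i}`, eigenvalues
`{λ_i}`, if for each `i` with `λ_i ∈ I` some `z_i ∈ {x,y}` satisfies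
`|ψ_i(z_i)| ≤ e^{-mL} Σ_{u∈S} |ψ_i(u)|`, then for any Borel `φ` with `|φ| ≤ 1` supported
in `I`, `|⟨δ_x, φ(H) δ_y⟩| ≤ 2|S| e^{-mL}`. -/
theorem stmt_3 {Λ : Type*} [Fintype Λ] (n : ℕ)
    (ψ : Fin n → Λ → ℂ) (lam : Fin n → ℝ)
    (horth : ∀ i j, ∑ v, ψ i v * (starRingEnd ℂ) (ψ j v) = if i = j then 1 else 0)
    (I : Set ℝ) (x y : Λ) (S : Finset Λ) (m L : ℝ) (hm : 0 < m) (hL : 1 ≤ L)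
    (hz : ∀ i, lam i ∈ I → ∃ z ∈ ({x, y} : Set Λ),
      ‖ψ i z‖ ≤ Real.exp (-m * L) * ∑ u ∈ S, ‖ψ i u‖)
    (φ : ℝ → ℂ) (hφ1 : ∀ t, ‖φ t‖ ≤ 1) (hφ2 : ∀ t, t ∉ I → φ t = 0) :
    ‖∑ i, φ (lam i) * ψ i x * (starRingEnd ℂ) (ψ i y)‖ ≤
      2 * (S.card : ℝ) * Real.exp (-m * L) :=
  stmt_3_general n ψ lam horth I x y S m L hz φ hφ1 hφ2
end

section
/- Let q ∈ (0,1), m > 0, and suppose a bounded function ψ : Z^d → ℝ satisfies: there exist k_0 and a scale sequence L_{k+1} = ⌊L_k^{4/3}⌋ + 1 such that for every y with ‖y‖ ≥ L_{k_0+1}, choosing k with L_{k+1} ≤ ‖y‖ < L_{k+2}, the function x ↦ |ψ(x)| is (L_k, e^{−m(1+L_k^{−1/8})L_k})-subharmonic on the ball B_R(y) with R = ‖y‖ − 2L_k − 1, and ‖ψ‖_∞ ≤ 1. Then, provided L_{k_0} is sufficiently large (depending only on m and the dimension), |ψ(y)| ≤ e^{−m‖y‖} for all y with ‖y‖ ≥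 L_{k_0+1}. -/
/-!
If `|ψ|` is `(Λ, q)`-subharmonic around `y`, then from any point whose `Λ`-ball stays in the
region one can step to a point at distance at most `Λ + 1` while losing a factor `q`. Starting at
`y` and walking as long as one stays within `‖y‖ - 3Λ - 1` of `y` gives about
`‖y‖ / (Λ + 1)` steps, hence `|ψ y| ≤ q ^ (‖y‖ / (Λ + 1))` up to lower order terms. Since
`‖y‖ ≥ Λ^{4/3}`, the extra factor `Λ^{-1/8}` in `q = e^{-m(1 + Λ^{-1/8})Λ}` absorbs both the
`+1` per step and the `3Λ + 1` lost at the boundary once `Λ` is large.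
-/

open Real

section Descent

variable {α : Type*} [PseudoMetricSpace α] {ψ : α → ℝ} {y : α}

lemma exists_abs_le_pow_mul_of_descent {q ρ R : ℝ} (hq : 0 ≤ q) (hρ : 0 ≤ ρ)
    (hstep : ∀ v, dist v y ≤ R → ∃ z, dist z v ≤ ρ ∧ |ψ v| ≤ q * |ψ z|) :
    ∀ n : ℕ, (n - 1) * ρ ≤ R → ∃ z, dist z y ≤ n * ρ ∧ |ψ y| ≤ q ^ n * |ψ z|
  | 0, _ => ⟨y, by simp, by simp⟩
  | n + 1, hn => by
    push_cast at hn
    obtain ⟨v, hvy, hv⟩ := exists_abs_le_pow_mul_of_descent hq hρ hstep n (by nlinarith)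
    obtain ⟨z, hzv, hz⟩ := hstep v (by linarith)
    refine ⟨z, ?_, ?_⟩
    · calc dist z y ≤ dist z v + dist v y := dist_triangle _ _ _
        _ ≤ (n + 1 : ℕ) * ρ := by push_cast; linarith
    · calc |ψ y| ≤ q ^ n * |ψ v| := hv
        _ ≤ q ^ n * (q * |ψ z|) := by gcongr
        _ = q ^ (n + 1) * |ψ z| := by ring

lemma abs_le_exp_of_descent {a ρ R : ℝ} (hψ : ∀ x, |ψ x| ≤ 1) (ha : 0 ≤ a) (hρ : 0 < ρ)
    (hstep : ∀ v, dist v y ≤ R → ∃ z, dist z v ≤ ρ ∧ |ψ v| ≤ exp (-a) * |ψ z|) :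
    |ψ y| ≤ exp (-a * (R / ρ)) := by
  rcases lt_or_ge R 0 with hR | hR
  · have : R / ρ < 0 := div_neg_of_neg_of_pos hR hρ
    exact (hψ y).trans (one_le_exp (by nlinarith))
  have hn : ((⌊R / ρ⌋₊ + 1 : ℕ) - 1 : ℝ) * ρ ≤ R := by
    push_cast
    simpa [div_mul_cancel₀ R hρ.ne'] using
      mul_le_mul_of_nonneg_right (Nat.floor_le (div_nonneg hR hρ.le)) hρ.le
  obtain ⟨z, -, hz⟩ := exists_abs_le_pow_mul_of_descent (exp_pos _).le hρ.le hstep _ hn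
  calc |ψ y| ≤ exp (-a) ^ (⌊R / ρ⌋₊ + 1) * |ψ z| := hz
    _ ≤ exp (-a) ^ (⌊R / ρ⌋₊ + 1) := mul_le_of_le_one_right (by positivity) (hψ z)
    _ = exp (-a * (⌊R / ρ⌋₊ + 1 : ℕ)) := by rw [← exp_nat_mul]; ring_nf
    _ ≤ exp (-a * (R / ρ)) := by
      rw [neg_mul, neg_mul, exp_le_exp, neg_le_neg_iff]
      gcongr
      push_cast
      exact (Nat.lt_floor_add_one (R / ρ)).le

end Descent

lemma lt_floor_rpow_add_one (n : ℕ) {p : ℝ} (hp : 1 ≤ p) : n < ⌊(n : ℝ) ^ p⌋₊ + 1 := by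
  rw [Nat.lt_succ_iff]
  refine Nat.le_floor ?_
  rcases n.eq_zero_or_pos with rfl | hn
  · simpa using rpow_nonneg (le_refl (0 : ℝ)) p
  · exact self_le_rpow_of_one_le (by exact_mod_cast hn) hp

lemma StrictMono.exists_le_lt_succ {f : ℕ → ℕ} (hf : StrictMono f) {n : ℕ} {x : ℝ}
    (hx : f n ≤ x) : ∃ k, n ≤ k ∧ (f k : ℝ) ≤ x ∧ x < f (k + 1) := by
  have hex : ∃ j, x < f j :=
    ⟨⌊x⌋₊ + 1, (Nat.lt_floor_add_one x).trans_le (by exact_mod_cast hf.id_le _)⟩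
  have hlt : n < Nat.find hex := by
    by_contra! h
    exact (Nat.find_spec hex).not_ge (le_trans (by exact_mod_cast hf.monotone h) hx)
  refine ⟨Nat.find hex - 1, by omega, ?_, ?_⟩
  · exact not_lt.1 (Nat.find_min hex (by omega))
  · rw [Nat.sub_add_cancel (by omega)]
    exact Nat.find_spec hex

lemma mul_add_one_le_of_pow_le {t r : ℝ} (ht : 2 ≤ t) (hr : t ^ 32 ≤ r) :
    r * (t ^ 24 + 1) ≤ (t ^ 24 + t ^ 21) * (r - 3 * t ^ 24 - 1) := by
  have ht1 : 1 ≤ t := by linarith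
  have hA : t ^ 21 ≤ t ^ 24 := pow_le_pow_right₀ ht1 (by norm_num)
  have hu : 1 ≤ t ^ 24 := one_le_pow₀ ht1
  have h2r : 2 * r ≤ t ^ 21 * r := by
    have : 2 ≤ t ^ 21 := ht.trans (le_self_pow₀ ht1 (by norm_num))
    exact mul_le_mul_of_nonneg_right this ((by positivity : (0 : ℝ) ≤ t ^ 32).trans hr)
  have hAr : 32 * (t ^ 24) ^ 2 ≤ t ^ 21 * r := by
    have h5 : (32 : ℝ) ≤ t ^ 5 := by
      calc (32 : ℝ) = 2 ^ 5 := by norm_num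
        _ ≤ t ^ 5 := by gcongr
    calc 32 * (t ^ 24) ^ 2 ≤ t ^ 5 * t ^ 48 := by rw [← pow_mul]; gcongr
      _ = t ^ 21 * t ^ 32 := by ring
      _ ≤ t ^ 21 * r := by gcongr
  nlinarith [mul_le_mul_of_nonneg_left hA (by linarith : (0:ℝ) ≤ t ^ 24)]

/- With `t = Λ^(1/24)` this becomes the polynomial inequality above. It is the budget of the
descent: `⌊R / (Λ + 1)⌋ + 1` steps of length `Λ + 1` fit into radius `R = r - 3Λ - 1`, and each
gains `e^{-m(1 + Λ^{-1/8})Λ}`; the extra `Λ^{7/8}` per step pays for the lost length. -/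
lemma mul_add_one_le_of_rpow_le {Λ r : ℝ} (hΛ : 2 ^ 24 ≤ Λ) (hr : Λ ^ (4 / 3 : ℝ) ≤ r) :
    r * (Λ + 1) ≤ (1 + Λ ^ (-(1 / 8) : ℝ)) * Λ * (r - 3 * Λ - 1) := by
  have hΛ0 : 0 < Λ := by linarith
  set t := Λ ^ (1 / 24 : ℝ)
  have hpow (n : ℕ) : t ^ n = Λ ^ ((n : ℝ) / 24) := by
    rw [← rpow_natCast, ← rpow_mul hΛ0.le]; ring_nf
  have hΛt : Λ = t ^ 24 := by rw [hpow]; norm_num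
  have ht : 2 ≤ t :=
    (pow_le_pow_iff_left₀ (by norm_num) (by positivity) (by norm_num : 24 ≠ 0)).1 (hΛt ▸ hΛ)
  have h32 : Λ ^ (4 / 3 : ℝ) = t ^ 32 := by rw [hpow]; norm_num
  have h21 : (1 + Λ ^ (-(1 / 8) : ℝ)) * Λ = t ^ 24 + t ^ 21 := by
    rw [add_mul, one_mul, ← rpow_add_one hΛ0.ne', hpow 21, ← hΛt]; norm_num
  rw [h21, hΛt]
  exact mul_add_one_le_of_pow_le ht (h32 ▸ hr)

/-- Deterministic core of Theorem 4.9 (exponential decay of eigenfunctions on `ℤ^d`).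
If `ψ` is bounded by `1` and, for every `y` with `‖y‖ ≥ L_{k0+1}` and `k ≥ k0` with
`L_{k+1} ≤ ‖y‖ < L_{k+2}`, `|ψ|` is `(L_k, e^{-m(1+L_k^{-1/8})L_k})`-subharmonic on
`B_R(y)` with `R = ‖y‖ - 2L_k - 1`, then (for `L_{k0}` large enough, depending only on
`m` and `d`) `|ψ(y)| ≤ e^{-m‖y‖}` for all `‖y‖ ≥ L_{k0+1}`. -/
theorem stmt_14 (d : ℕ) (m : ℝ) (hm : 0 < m) :
    ∃ Lstar : ℕ, ∀ L : ℕ → ℕ, 2 < L 0 →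
      (∀ k, L (k + 1) = ⌊(L k : ℝ) ^ ((4 : ℝ) / 3)⌋₊ + 1) →
      ∀ k0 : ℕ, Lstar ≤ L k0 →
      ∀ ψ : (Fin d → ℤ) → ℝ, (∀ x, |ψ x| ≤ 1) →
      (∀ (y : Fin d → ℤ) (k : ℕ), k0 ≤ k →
        (L (k + 1) : ℝ) ≤ ‖y‖ → ‖y‖ < (L (k + 2) : ℝ) →
        ∀ v : Fin d → ℤ,
          (∀ z : Fin d → ℤ, ‖z - v‖ ≤ (L k : ℝ) →
            ‖z - y‖ ≤ ‖y‖ - 2 * (L k : ℝ) - 1) →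
          ∃ z : Fin d → ℤ, ‖z - v‖ ≤ (L k : ℝ) + 1 ∧
            |ψ v| ≤ Real.exp (-m * (1 + (L k : ℝ) ^ (-(1 / 8 : ℝ))) * (L k : ℝ)) * |ψ z|) →
      ∀ y : Fin d → ℤ, (L (k0 + 1) : ℝ) ≤ ‖y‖ → |ψ y| ≤ Real.exp (-m * ‖y‖) := by
  refine ⟨2 ^ 24, fun L _ hL k0 hk0 ψ hψ hsub y hy => ?_⟩
  have hmono : StrictMono L := strictMono_nat_of_lt_succ fun k =>
    hL k ▸ lt_floor_rpow_add_one (L k) (by norm_num)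
  obtain ⟨j, hkj, hjy, hyj⟩ := hmono.exists_le_lt_succ hy
  obtain ⟨k, rfl⟩ : ∃ k, j = k + 1 := ⟨j - 1, by omega⟩
  have hΛ : (2 : ℝ) ^ 24 ≤ L k := by
    exact_mod_cast hk0.trans (hmono.monotone (by omega : k0 ≤ k))
  have hr : (L k : ℝ) ^ (4 / 3 : ℝ) ≤ ‖y‖ := by
    refine le_trans ?_ hjy
    rw [hL k]
    push_cast
    exact (Nat.lt_floor_add_one _).le
  set Λ : ℝ := (L k : ℝ)
  set ε : ℝ := Λ ^ (-(1 / 8 : ℝ))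
  have hdecay : |ψ y| ≤ exp (-(m * (1 + ε) * Λ) * ((‖y‖ - 3 * Λ - 1) / (Λ + 1))) := by
    refine abs_le_exp_of_descent hψ (by positivity) (by positivity) fun v hv => ?_
    rw [dist_eq_norm] at hv
    obtain ⟨z, hz, hvz⟩ := hsub y k (by omega) hjy hyj v fun w hw => by
      linarith [norm_sub_le_norm_sub_add_norm_sub w v y]
    exact ⟨z, by rwa [dist_eq_norm], by simpa only [neg_mul] using hvz⟩
  refine hdecay.trans (exp_le_exp.2 ?_)
  rw [neg_mul, neg_mul, neg_le_neg_iff, mul_assoc m, mul_assoc m]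
  gcongr
  rw [mul_div_assoc', le_div_iff₀ (by positivity)]
  exact mul_add_one_le_of_rpow_le hΛ hr
end
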